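/- Let H be a Hopf algebra with invertible antipode S and B braided-commutative in right H-crossed modules. In the smash product B # H^{op}, the target map t_L(a) = a₍₀₎ ⊗ a₍₁₎ and S(a ⊗ h) = a₍₀₎ ◁ S⁻²(a₍₁₎) S⁻¹(h₂) ⊗ S⁻²(a₍₂₎) S⁻¹(h₁) satisfy S ∘ t_L = s_L, where s_L(a) = a ⊗ 1. -/

import Mathlib

open TensorProduct

noncomputable section

variable (k : Type) [Field k]
variable (H : Type) [Ring H] [HopfAlgebra k H]
variable (B : Type) [Ring B] [Algebra k B]
variable (act : B ⊗[k] H →ₗ[k] B) (coact : B →ₗ[k] B ⊗[k] H)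

/-- `(a ◁ h₂)₍₀₎ ⊗ h₁ · (a ◁ h₂)₍₁₎` for a right action `act` and right coaction `coact`. -/
def ydLHS (a : B) (h : H) : B ⊗[k] H :=
  (TensorProduct.map (LinearMap.id : B →ₗ[k] B) (LinearMap.mul' k H))
    ((TensorProduct.assoc k B H H)
      ((TensorProduct.map (TensorProduct.comm k H B).toLinearMap (LinearMap.id : H →ₗ[k] H))
        ((TensorProduct.assoc k H B H).symm
          ((TensorProduct.map (LinearMap.id : H →ₗ[k] H)
              (coact ∘ₗ act ∘ₗ TensorProduct.mk k B H a))
            (Coalgebra.comul (R := k) h)))))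

/-- `a₍₀₎ ◁ h₁ ⊗ a₍₁₎ · h₂`. -/
def ydRHS (a : B) (h : H) : B ⊗[k] H :=
  (TensorProduct.map act (LinearMap.mul' k H))
    ((TensorProduct.tensorTensorTensorComm k B H H H)
      (coact a ⊗ₜ[k] Coalgebra.comul (R := k) h))

/-- Iterated coaction `a ↦ (a₍₀₎ ⊗ a₍₁₎) ⊗ a₍₂₎`. -/
def coact2 : B →ₗ[k] (B ⊗[k] H) ⊗[k] H :=
  (TensorProduct.map coact (LinearMap.id : H →ₗ[k] H)) ∘ₗ coact

variable (Sinv : H →ₗ[k] H)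

/-- The antipode `S(a ⊗ h) = a₍₀₎ ◁ S⁻²(a₍₁₎) S⁻¹(h₂) ⊗ S⁻²(a₍₂₎) S⁻¹(h₁)` on `B # H^{op}`. -/
def smashS : B ⊗[k] H →ₗ[k] B ⊗[k] H :=
  (TensorProduct.map
      (act ∘ₗ
        (TensorProduct.map (LinearMap.id : B →ₗ[k] B) (LinearMap.mul' k H)) ∘ₗ
        (TensorProduct.map (LinearMap.id : B →ₗ[k] B)
          (TensorProduct.map (Sinv ∘ₗ Sinv) Sinv)) ∘ₗ
        (TensorProduct.assoc k B H H).toLinearMap)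
      (LinearMap.mul' k H ∘ₗ TensorProduct.map (Sinv ∘ₗ Sinv) Sinv)) ∘ₗ
  (TensorProduct.tensorTensorTensorComm k (B ⊗[k] H) H H H).toLinearMap ∘ₗ
  (TensorProduct.map (LinearMap.id : (B ⊗[k] H) ⊗[k] H →ₗ[k] (B ⊗[k] H) ⊗[k] H)
      (TensorProduct.comm k H H).toLinearMap) ∘ₗ
  (TensorProduct.map (coact2 k H B coact) (Coalgebra.comul (R := k)))


/-!
In Sweedler notation `S(t_L a) = a₍₀₎ ◁ S⁻²(a₍₁₎) S⁻¹(a₍₄₎) ⊗ S⁻²(a₍₂₎) S⁻¹(a₍₃₎)`. The four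
factors are those of the convolution product `α * β * (γ * δ)` in `Hom(H, H ⊗ H)`, with
`α = S⁻² ⊗ 1`, `β = 1 ⊗ S⁻²`, `γ = 1 ⊗ S⁻¹`, `δ = S⁻¹ ⊗ 1`. Since `S⁻² * S⁻¹ = ε` in
`Hom(H, H)`, first `β * γ` and then `α * δ` collapse to the unit, leaving
`a₍₀₎ ◁ ε(a₍₁₎) ⊗ 1 = a ⊗ 1`.
-/

open WithConv

section InverseAntipode

variable {R A : Type*} [CommSemiring R] [Semiring A] [HopfAlgebra R A] {Sinv : A →ₗ[R] A}

lemma inverse_antipode_mul_antidistrib (hS : ∀ a, Sinv (HopfAlgebra.antipode R a) = a)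
    (hS' : ∀ a, HopfAlgebra.antipode R (Sinv a) = a) (x y : A) :
    Sinv (x * y) = Sinv y * Sinv x := by
  rw [← hS (Sinv y * Sinv x), HopfAlgebra.antipode_mul_antidistrib, hS', hS']

/-- `S⁻²(a₁) S⁻¹(a₂) = S⁻¹(a₂ S⁻¹(a₁)) = S⁻²(a₁ S(a₂)) = ε(a) 1`. -/
lemma toConv_inverse_antipode_sq_mul_eq_one (hS : ∀ a, Sinv (HopfAlgebra.antipode R a) = a)
    (hS' : ∀ a, HopfAlgebra.antipode R (Sinv a) = a) :
    toConv (Sinv ∘ₗ Sinv) * toConv Sinv = 1 := by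
  ext a
  let r := Coalgebra.Repr.arbitrary R a
  have hSinv_algebraMap (c : R) : Sinv (algebraMap R A c) = algebraMap R A c := by
    have hSinv_one : Sinv 1 = 1 := by simpa using hS 1
    rw [Algebra.algebraMap_eq_smul_one, map_smul, hSinv_one]
  calc (toConv (Sinv ∘ₗ Sinv) * toConv Sinv).ofConv a
      = ∑ i ∈ r.index, Sinv (Sinv (r.left i)) * Sinv (r.right i) := r.convMul_apply _ _
    _ = Sinv (Sinv (∑ i ∈ r.index, r.left i * HopfAlgebra.antipode R (r.right i))) := by
        simp only [map_sum, inverse_antipode_mul_antidistrib hS hS', hS]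
    _ = (1 : WithConv (A →ₗ[R] A)).ofConv a := by
        rw [HopfAlgebra.sum_mul_antipode_eq_algebraMap_counit, hSinv_algebraMap,
          hSinv_algebraMap]
        rfl

end InverseAntipode

section Convolution

variable {R C A : Type*} [CommSemiring R] [AddCommMonoid C] [Module R C] [Coalgebra R C]
  [Semiring A] [Algebra R A]

def convIncludeLeft (f : C →ₗ[R] A) : WithConv (C →ₗ[R] A ⊗[R] A) :=
  toConv (Algebra.TensorProduct.includeLeft.toLinearMap ∘ₗ f)

def convIncludeRight (f : C →ₗ[R] A) : WithConv (C →ₗ[R] A ⊗[R] A) :=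
  toConv (Algebra.TensorProduct.includeRight.toLinearMap ∘ₗ f)

lemma toConv_algHom_comp_mul_eq_one {B : Type*} [Semiring B] [Algebra R B] (φ : A →ₐ[R] B)
    {f g : C →ₗ[R] A} (hfg : toConv f * toConv g = 1) :
    toConv (φ.toLinearMap ∘ₗ f) * toConv (φ.toLinearMap ∘ₗ g) = 1 := by
  rw [← toConv_ofConv (_ * _), ← LinearMap.algHom_comp_convMul_distrib, hfg]
  ext c
  simp

lemma convIncludeLeft_mul_convIncludeRight_mul_eq_one {f g : C →ₗ[R] A}
    (hfg : toConv f * toConv g = 1) :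
    convIncludeLeft f * convIncludeRight f * (convIncludeRight g * convIncludeLeft g) = 1 := by
  rw [mul_assoc, ← mul_assoc (convIncludeRight f), convIncludeRight, convIncludeRight,
    toConv_algHom_comp_mul_eq_one _ hfg, one_mul, convIncludeLeft, convIncludeLeft,
    toConv_algHom_comp_mul_eq_one _ hfg]

end Convolution

section Comodule

variable {R M C A : Type*} [CommSemiring R] [AddCommMonoid M] [Module R M]
  [AddCommMonoid C] [Module R C] [Coalgebra R C] [Semiring A] [Algebra R A]
  {ρ : M →ₗ[R] M ⊗[R] C}

/-- `m ↦ φ(m₍₀₎) (1 ⊗ g(m₍₁₎))` for a coaction `ρ(m) = m₍₀₎ ⊗ m₍₁₎`. -/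
def coactConvMul (ρ : M →ₗ[R] M ⊗[R] C) (φ : M →ₗ[R] M ⊗[R] A) (g : WithConv (C →ₗ[R] A)) :
    M →ₗ[R] M ⊗[R] A :=
  (LinearMap.mul' R A).lTensor M ∘ₗ (TensorProduct.assoc R M A A).toLinearMap ∘ₗ
    map φ g.ofConv ∘ₗ ρ

lemma coactConvMul_lTensor_comp
    (hcoassoc : ∀ m : M, TensorProduct.assoc R M C C (map ρ LinearMap.id (ρ m)) =
      map LinearMap.id Coalgebra.comul (ρ m))
    (f g : WithConv (C →ₗ[R] A)) :
    coactConvMul ρ (f.ofConv.lTensor M ∘ₗ ρ) g = (f * g).ofConv.lTensor M ∘ₗ ρ := by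
  ext m
  have hsplit : map (f.ofConv.lTensor M ∘ₗ ρ) g.ofConv (ρ m) =
      map (map LinearMap.id f.ofConv) g.ofConv (map ρ LinearMap.id (ρ m)) := by
    rw [← LinearMap.map_comp_rTensor]
    rfl
  simp only [coactConvMul, LinearMap.comp_apply, LinearEquiv.coe_coe, hsplit, ← map_map_assoc,
    hcoassoc]
  change (LinearMap.mul' R A).lTensor M ((map f.ofConv g.ofConv).lTensor M
    (Coalgebra.comul.lTensor M (ρ m))) = _
  rw [← LinearMap.lTensor_comp_apply, ← LinearMap.lTensor_comp_apply]
  rfl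

lemma lTensor_convOne_comp_coact
    (hcounit : ∀ m : M, TensorProduct.rid R M (map LinearMap.id Coalgebra.counit (ρ m)) = m) :
    (1 : WithConv (C →ₗ[R] A)).ofConv.lTensor M ∘ₗ ρ = (TensorProduct.mk R M A).flip 1 := by
  ext m
  have hρ : map LinearMap.id Coalgebra.counit (ρ m) = m ⊗ₜ 1 := by
    rw [← TensorProduct.rid_symm_apply, LinearEquiv.eq_symm_apply, hcounit]
  simp only [LinearMap.convOne_def, LinearMap.comp_apply, LinearMap.lTensor_comp_apply]
  simp [LinearMap.lTensor, hρ]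

end Comodule

lemma smashS_eq_comp_map_coact2 :
    smashS k H B act coact Sinv =
      (act.rTensor H ∘ₗ (TensorProduct.assoc k B H H).symm.toLinearMap ∘ₗ
        (LinearMap.mul' k (H ⊗[k] H)).lTensor B ∘ₗ
        (TensorProduct.assoc k B (H ⊗[k] H) (H ⊗[k] H)).toLinearMap ∘ₗ
        map ((LinearMap.mul' k (H ⊗[k] H)).lTensor B ∘ₗ
            (TensorProduct.assoc k B (H ⊗[k] H) (H ⊗[k] H)).toLinearMap ∘ₗ
            map ((convIncludeLeft (Sinv ∘ₗ Sinv)).ofConv.lTensor B)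
              (convIncludeRight (Sinv ∘ₗ Sinv)).ofConv)
          (LinearMap.mul' k (H ⊗[k] H) ∘ₗ
            map (convIncludeRight Sinv).ofConv (convIncludeLeft Sinv).ofConv)) ∘ₗ
        map (coact2 k H B coact) Coalgebra.comul := by
  rw [smashS, ← LinearMap.comp_assoc, ← LinearMap.comp_assoc]
  congr 1
  ext b x y u v
  simp [convIncludeLeft, convIncludeRight]

lemma smashS_comp_coact :
    smashS k H B act coact Sinv ∘ₗ coact =
      act.rTensor H ∘ₗ (TensorProduct.assoc k B H H).symm.toLinearMap ∘ₗ
        coactConvMul coact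
          (coactConvMul coact ((convIncludeLeft (Sinv ∘ₗ Sinv)).ofConv.lTensor B ∘ₗ coact)
            (convIncludeRight (Sinv ∘ₗ Sinv)))
          (convIncludeRight Sinv * convIncludeLeft Sinv) := by
  rw [smashS_eq_comp_map_coact2]
  ext a
  simp only [LinearMap.comp_apply, coactConvMul, LinearMap.convMul_def, ofConv_toConv]
  congr 4
  induction coact a with
  | zero => simp
  | add x y hx hy => simp only [map_add, hx, hy]
  | tmul b h =>
    simp only [map_tmul, LinearMap.comp_apply, coact2]
    rw [← LinearMap.map_comp_rTensor]
    rfl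

theorem smash_S_target_eq_source
    (hact_one : ∀ b : B, act (b ⊗ₜ[k] 1) = b)
    (hcoassoc : ∀ b : B,
      (TensorProduct.assoc k B H H)
          ((TensorProduct.map coact (LinearMap.id : H →ₗ[k] H)) (coact b)) =
        (TensorProduct.map (LinearMap.id : B →ₗ[k] B) (Coalgebra.comul (R := k))) (coact b))
    (hcounit : ∀ b : B,
      (TensorProduct.rid k B)
        ((TensorProduct.map (LinearMap.id : B →ₗ[k] B) (Coalgebra.counit (R := k)))
          (coact b)) = b)
    (hSinv₁ : ∀ h : H, Sinv (HopfAlgebra.antipode (R := k) h) = h)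
    (hSinv₂ : ∀ h : H, HopfAlgebra.antipode (R := k) (Sinv h) = h)
    :
    ∀ a : B, smashS k H B act coact Sinv (coact a) = a ⊗ₜ[k] (1 : H) := by
  intro a
  have hcollapse := convIncludeLeft_mul_convIncludeRight_mul_eq_one
    (toConv_inverse_antipode_sq_mul_eq_one hSinv₁ hSinv₂)
  have h := LinearMap.congr_fun (smashS_comp_coact k H B act coact Sinv) a
  rw [coactConvMul_lTensor_comp hcoassoc, coactConvMul_lTensor_comp hcoassoc, hcollapse,
    lTensor_convOne_comp_coact hcounit] at h
  simpa [Algebra.TensorProduct.one_def, hact_one] using h
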